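/- Let A ⊆ ℕ be such that the upper Banach logarithmic density ℓBD(A) is positive, and fix l ∈ ℕ. Then there exists n ∈ ℕ such that, for any m ∈ ℕ, there exist a, r ∈ ℕ with a > m and r > m such that the geometric progression G = {a·r^i : i = 0, 1, …, l−1} is an n-approximate subset of A. -/

import Mathlib

/-!
Cut `ℕ` into dyadic blocks `[k 2^j, k 2^(j+1))`. Each block carries logarithmic mass at most `1`,
so `ℓBD(A) > 0` gives, at arbitrarily large scales `J`, a proportion `δ > 0` of blocks `j < J` that
meet `A`. In the exponent `j`, a geometric progression of ratio `2^ρ` is an arithmetic progression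
of difference `ρ`, and `2^(D+1)`-approximation only asks for an occupied block within distance `D`.

Such progressions come from a stabilisation argument. The densities of the `D`-neighbourhoods of
the occupied sets are bounded, so some `D₀` is nearly optimal: for every `ρ`, the
`(D₀ + lρ)`-neighbourhood is frequently barely larger than the `D₀`-neighbourhood, and counting
then shows that most points of the latter start an `l`-term progression of difference `ρ` inside it.
-/

open Filter

/-- The quantity `sup_{k ≥ 1} (1/ln n) · Σ_{x ∈ A ∩ [k, nk]} 1/x`. -/
noncomputable def lBDseq (A : Set ℕ) (n : ℕ) : ℝ :=
  ⨆ k : {k : ℕ // 1 ≤ k},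
    (1 / Real.log n) * ∑ x ∈ Finset.Icc (k : ℕ) (n * k), Set.indicator A (fun x => 1 / (x : ℝ)) x

/-- The upper Banach logarithmic density, `ℓBD(A) = lim_{n→∞} lBDseq A n`.
Since the limit always exists, it coincides with the `limsup`, which we use as definition. -/
noncomputable def lBD (A : Set ℕ) : ℝ :=
  Filter.limsup (lBDseq A) Filter.atTop

/-- A set `X` is an `n`-approximate subset of `A` if every `x ∈ X` satisfies
`x/n < a < x*n` for some `a ∈ A`. -/
def ApproxSubset (n : ℕ) (X A : Set ℕ) : Prop :=
  ∀ x ∈ X, ∃ a ∈ A, x < a * n ∧ a < x * n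

open Finset

def thicken (D : ℕ) (S : Finset ℕ) : Finset ℕ :=
  S.biUnion fun s => Icc (s - D) (s + D)

section Thicken

variable {D D' x : ℕ} {S : Finset ℕ}

theorem mem_thicken : x ∈ thicken D S ↔ ∃ s ∈ S, s ≤ x + D ∧ x ≤ s + D := by
  simp only [thicken, mem_biUnion, mem_Icc]
  exact exists_congr fun s => and_congr_right fun _ => by omega

theorem subset_thicken : S ⊆ thicken D S :=
  fun s hs => mem_thicken.2 ⟨s, hs, by omega, by omega⟩

theorem thicken_mono (h : D ≤ D') : thicken D S ⊆ thicken D' S := fun x hx => by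
  obtain ⟨s, hs, h₁, h₂⟩ := mem_thicken.1 hx
  exact mem_thicken.2 ⟨s, hs, by omega, by omega⟩

theorem add_mem_thicken_add {e : ℕ} (hx : x ∈ thicken D S) : x + e ∈ thicken (D + e) S := by
  obtain ⟨s, hs, h₁, h₂⟩ := mem_thicken.1 hx
  exact mem_thicken.2 ⟨s, hs, by omega, by omega⟩

theorem card_thicken_le {J : ℕ} (hS : S ⊆ range J) : #(thicken D S) ≤ J + D := by
  refine (card_le_card fun x hx => ?_).trans (card_range (J + D)).le
  obtain ⟨s, hs, h₁, h₂⟩ := mem_thicken.1 hx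
  have := mem_range.1 (hS hs)
  exact mem_range.2 (by omega)

end Thicken

/-- Each `x ∈ E` whose progression leaves `E` is charged to a point of `E' \ E`, and each such
point is charged at most `l` times. -/
theorem exists_ge_forall_add_mul_mem {E E' : Finset ℕ} {l ρ X : ℕ}
    (hshift : ∀ x ∈ E, ∀ i < l, x + i * ρ ∈ E') (hcard : X + l * #(E' \ E) < #E) :
    ∃ x ≥ X, ∀ i < l, x + i * ρ ∈ E := by
  classical
  have hbad : #(E.filter fun x => ¬∀ i < l, x + i * ρ ∈ E) ≤ l * #(E' \ E) := by
    calc _ ≤ #((range l).biUnion fun i => (E' \ E).image (· - i * ρ)) := by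
          refine card_le_card fun x hx => ?_
          obtain ⟨hxE, hx⟩ := mem_filter.1 hx
          push Not at hx
          obtain ⟨i, hi, hiE⟩ := hx
          exact mem_biUnion.2 ⟨i, mem_range.2 hi, mem_image.2
            ⟨x + i * ρ, mem_sdiff.2 ⟨hshift x hxE i hi, hiE⟩, Nat.add_sub_cancel _ _⟩⟩
      _ ≤ #(range l) * #(E' \ E) := card_biUnion_le_card_mul _ _ _ fun _ _ => card_image_le
      _ = l * #(E' \ E) := by rw [card_range]
  have hgood : #(range X) < #(E.filter fun x => ∀ i < l, x + i * ρ ∈ E) := by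
    have := card_filter_add_card_filter_not (s := E) fun x => ∀ i < l, x + i * ρ ∈ E
    rw [card_range]
    omega
  obtain ⟨x, hx, hxX⟩ := exists_mem_notMem_of_card_lt_card hgood
  exact ⟨x, by simpa using hxX, (mem_filter.1 hx).2⟩

/-- Choose `D₀` with `limsup u D₀` within `ε / 2` of `⨆ D, limsup u D`. -/
theorem exists_forall_frequently_lt_add {ι : Type*} {F : Filter ι} [F.NeBot] (u : ℕ → ι → ℝ)
    {B : ℝ} (h0 : ∀ D i, 0 ≤ u D i) (hB : ∀ D, ∀ᶠ i in F, u D i ≤ B) {ε : ℝ} (hε : 0 < ε) :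
    ∃ D₀, ∀ D, ∃ᶠ i in F, u D i < u D₀ i + ε := by
  have hcobdd D : IsCoboundedUnder (· ≤ ·) F (u D) := isCoboundedUnder_le_of_le F (h0 D)
  have hle D : limsup (u D) F ≤ B := limsup_le_of_le (hcobdd D) (hB D)
  have hbdd : BddAbove (Set.range fun D => limsup (u D) F) := ⟨B, Set.forall_mem_range.2 hle⟩
  obtain ⟨D₀, hD₀⟩ := exists_lt_of_lt_ciSup (sub_lt_self (⨆ D, limsup (u D) F) (half_pos hε))
  refine ⟨D₀, fun D => ?_⟩
  have hlow : ∃ᶠ i in F, (⨆ D, limsup (u D) F) - ε / 2 < u D₀ i :=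
    frequently_lt_of_lt_limsup (hcobdd D₀) hD₀
  have hup : ∀ᶠ i in F, u D i < (⨆ D, limsup (u D) F) + ε / 2 :=
    eventually_lt_of_limsup_lt ((le_ciSup hbdd D).trans_lt (lt_add_of_pos_right _ (half_pos hε)))
      (isBoundedUnder_of_eventually_le (hB D))
  exact (hlow.and_eventually hup).mono fun i ⟨h₁, h₂⟩ => by linarith

theorem exists_forall_add_mul_mem_thicken {ι : Type*} (J : ι → ℕ) (S : ι → Finset ℕ) {δ : ℝ}
    (hδ : 0 < δ) (hJ : ∀ T, ∃ i, T ≤ J i) (hS : ∀ i, S i ⊆ range (J i))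
    (hdense : ∀ i, δ * J i ≤ #(S i)) (l : ℕ) :
    ∃ D, ∀ ρ X, ∃ i, ∃ x ≥ X, ∀ j < l, x + j * ρ ∈ thicken D (S i) := by
  let F := comap J atTop
  have hJF : Tendsto J F atTop := tendsto_comap
  have : F.NeBot := comap_neBot_iff_frequently.2 <| frequently_atTop.2 fun T =>
    let ⟨i, hi⟩ := hJ T; ⟨J i, hi, i, rfl⟩
  let u D i : ℝ := #(thicken D (S i)) / J i
  have hB D : ∀ᶠ i in F, u D i ≤ 2 := by
    filter_upwards [hJF.eventually_ge_atTop D] with i hi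
    have : (#(thicken D (S i)) : ℝ) ≤ J i + D := by exact_mod_cast card_thicken_le (hS i)
    have : (D : ℝ) ≤ J i := by exact_mod_cast hi
    exact div_le_of_le_mul₀ (by positivity) zero_le_two (by linarith)
  obtain ⟨D, hD⟩ := exists_forall_frequently_lt_add u (fun _ _ => by positivity) hB
    (div_pos hδ (by positivity : (0 : ℝ) < 2 * l + 1))
  refine ⟨D, fun ρ X => ?_⟩
  obtain ⟨n, hn⟩ := exists_nat_gt (2 * X / δ)
  obtain ⟨i, hi, hiJ⟩ := ((hD (D + l * ρ)).and_eventually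
    (hJF.eventually_ge_atTop (n + 1))).exists
  set E := thicken D (S i)
  set E' := thicken (D + l * ρ) (S i)
  have hJpos : (0 : ℝ) < J i := by exact_mod_cast (show 0 < J i by omega)
  have hXJ : (X : ℝ) < δ / 2 * J i := by
    rw [div_lt_iff₀ hδ] at hn
    have : (n : ℝ) + 1 ≤ J i := by exact_mod_cast hiJ
    nlinarith
  have hsub : E ⊆ E' := thicken_mono (by omega)
  have hgap : (#(E' \ E) : ℝ) < δ / (2 * l + 1) * J i := by
    have := hi
    simp only [u] at this
    rw [div_lt_iff₀ hJpos, add_mul, div_mul_cancel₀ _ hJpos.ne'] at this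
    rw [card_sdiff_of_subset hsub, Nat.cast_sub (card_le_card hsub)]
    linarith
  have hl : (l : ℝ) * (δ / (2 * l + 1) * J i) ≤ δ / 2 * J i := by
    rw [show (l : ℝ) * (δ / (2 * l + 1) * J i) = l / (2 * l + 1) * (δ * J i) by ring,
      show δ / 2 * J i = 1 / 2 * (δ * J i) by ring]
    gcongr ?_ * _
    rw [div_le_div_iff₀ (by positivity) two_pos]
    linarith
  have hE : δ * J i ≤ #E := (hdense i).trans (by exact_mod_cast card_le_card subset_thicken)
  have hcard : (X : ℝ) + l * #(E' \ E) < #E := by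
    nlinarith [mul_le_mul_of_nonneg_left hgap.le (Nat.cast_nonneg l)]
  refine ⟨i, exists_ge_forall_add_mul_mem (fun x hx j hj => ?_) (by exact_mod_cast hcard)⟩
  exact thicken_mono (by gcongr) (add_mem_thicken_add hx)

noncomputable def occupiedBlocks (A : Set ℕ) (k J : ℕ) : Finset ℕ :=
  open Classical in (range J).filter fun j => ∃ a ∈ A, k * 2 ^ j ≤ a ∧ a < k * 2 ^ (j + 1)

theorem mem_occupiedBlocks {A : Set ℕ} {k J j : ℕ} :
    j ∈ occupiedBlocks A k J ↔ j < J ∧ ∃ a ∈ A, k * 2 ^ j ≤ a ∧ a < k * 2 ^ (j + 1) := by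
  simp [occupiedBlocks]

theorem sum_Ico_mul_two_pow {M : Type*} [AddCommMonoid M] (f : ℕ → M) (k J : ℕ) :
    ∑ x ∈ Ico k (k * 2 ^ J), f x = ∑ j ∈ range J, ∑ x ∈ Ico (k * 2 ^ j) (k * 2 ^ (j + 1)), f x := by
  induction J with
  | zero => simp
  | succ J ih =>
    rw [sum_range_succ, ← ih, sum_Ico_consecutive]
    · exact Nat.le_mul_of_pos_right k (by positivity)
    · exact Nat.mul_le_mul_left k (Nat.pow_le_pow_right two_pos J.le_succ)

theorem sum_Ico_indicator_inv_le_one (A : Set ℕ) (M : ℕ) :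
    ∑ x ∈ Ico M (2 * M), A.indicator (fun x => 1 / (x : ℝ)) x ≤ 1 := by
  rcases Nat.eq_zero_or_pos M with rfl | hM
  · simp
  calc _ ≤ ∑ _x ∈ Ico M (2 * M), 1 / (M : ℝ) := by
        refine sum_le_sum fun x hx => ?_
        refine Set.indicator_apply_le' (fun _ => ?_) fun _ => by positivity
        gcongr
        exact (mem_Ico.1 hx).1
    _ = 1 := by
        rw [sum_const, Nat.card_Ico, nsmul_eq_mul, show 2 * M - M = M by omega]
        field_simp

theorem sum_Icc_le_card_occupiedBlocks (A : Set ℕ) {k N J : ℕ} (hk : 1 ≤ k) (hN : N < 2 ^ J) :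
    ∑ x ∈ Icc k (N * k), A.indicator (fun x => 1 / (x : ℝ)) x ≤ #(occupiedBlocks A k J) := by
  classical
  have hnonneg : ∀ x, 0 ≤ A.indicator (fun x => 1 / (x : ℝ)) x :=
    Set.indicator_nonneg fun _ _ => by positivity
  have hsub : Icc k (N * k) ⊆ Ico k (k * 2 ^ J) := fun x hx => by
    have := mem_Icc.1 hx
    have : N * k < k * 2 ^ J := by nlinarith
    exact mem_Ico.2 (by omega)
  calc _ ≤ ∑ x ∈ Ico k (k * 2 ^ J), A.indicator (fun x => 1 / (x : ℝ)) x :=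
        sum_le_sum_of_subset_of_nonneg hsub fun x _ _ => hnonneg x
    _ = ∑ j ∈ occupiedBlocks A k J, ∑ x ∈ Ico (k * 2 ^ j) (k * 2 ^ (j + 1)),
          A.indicator (fun x => 1 / (x : ℝ)) x := by
        rw [sum_Ico_mul_two_pow, occupiedBlocks, sum_filter_of_ne]
        intro j _ hj
        obtain ⟨x, hx, hxA⟩ := exists_ne_zero_of_sum_ne_zero hj
        exact ⟨x, Set.mem_of_indicator_ne_zero hxA, mem_Ico.1 hx⟩
    _ ≤ ∑ _j ∈ occupiedBlocks A k J, (1 : ℝ) := sum_le_sum fun j _ => by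
        rw [pow_succ, ← mul_assoc, mul_comm _ 2]
        exact sum_Ico_indicator_inv_le_one A _
    _ = #(occupiedBlocks A k J) := by simp

theorem lBDseq_nonneg (A : Set ℕ) (N : ℕ) : 0 ≤ lBDseq A N :=
  Real.iSup_nonneg fun _ => mul_nonneg (one_div_nonneg.2 (Real.log_natCast_nonneg N))
    (sum_nonneg fun _ _ => Set.indicator_nonneg (fun _ _ => by positivity) _)

theorem natLog_add_one_le_four_mul_log {N : ℕ} (hN : 2 ≤ N) :
    (Nat.log 2 N + 1 : ℝ) ≤ 4 * Real.log N := by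
  have hL : (1 : ℝ) ≤ Nat.log 2 N := by exact_mod_cast Nat.log_pos one_lt_two hN
  have hpow : Nat.log 2 N * Real.log 2 ≤ Real.log N := by
    rw [← Real.log_pow]
    exact Real.log_le_log (by positivity) (by exact_mod_cast Nat.pow_log_le_self 2 (by omega))
  nlinarith [Real.log_two_gt_d9]

theorem exists_dense_occupiedBlocks {A : Set ℕ} (hA : 0 < lBD A) :
    ∃ δ : ℝ, 0 < δ ∧ ∀ T, ∃ k J, 1 ≤ k ∧ T ≤ J ∧ δ * J ≤ #(occupiedBlocks A k J) := by
  have hfreq : ∃ᶠ N in atTop, lBD A / 2 < lBDseq A N :=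
    frequently_lt_of_lt_limsup (isCoboundedUnder_le_of_le atTop (lBDseq_nonneg A))
      (half_lt_self hA)
  refine ⟨lBD A / 8, by positivity, fun T => ?_⟩
  obtain ⟨N, hNT, hN⟩ := hfreq.forall_exists_of_atTop (2 ^ T + 2)
  have hN2 : 2 ≤ N := le_of_add_le_right hNT
  obtain ⟨⟨k, hk⟩, hsum⟩ := exists_lt_of_lt_ciSup hN
  have hlog : 0 < Real.log N := Real.log_pos (by exact_mod_cast hN2)
  rw [one_div_mul_eq_div, lt_div_iff₀ hlog] at hsum
  refine ⟨k, Nat.log 2 N + 1, hk, ?_, ?_⟩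
  · have := Nat.le_log_of_pow_le one_lt_two (show 2 ^ T ≤ N by omega)
    omega
  refine le_of_lt ?_
  calc lBD A / 8 * ((Nat.log 2 N + 1 : ℕ) : ℝ) ≤ lBD A / 2 * Real.log N := by
        push_cast
        nlinarith [natLog_add_one_le_four_mul_log hN2]
    _ < _ := hsum
    _ ≤ _ := sum_Icc_le_card_occupiedBlocks A hk (Nat.lt_pow_succ_log_self one_lt_two N)

theorem lt_mul_two_pow_of_mem_block {k s t D b : ℕ} (hk : 1 ≤ k) (hst : s ≤ t + D)
    (hts : t ≤ s + D) (hb : k * 2 ^ s ≤ b) (hb' : b < k * 2 ^ (s + 1)) :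
    k * 2 ^ t < b * 2 ^ (D + 1) ∧ b < k * 2 ^ t * 2 ^ (D + 1) := by
  constructor
  · calc k * 2 ^ t < k * 2 ^ (s + (D + 1)) :=
          Nat.mul_lt_mul_of_pos_left (Nat.pow_lt_pow_right one_lt_two (by omega)) hk
      _ = k * 2 ^ s * 2 ^ (D + 1) := by rw [pow_add, mul_assoc]
      _ ≤ b * 2 ^ (D + 1) := Nat.mul_le_mul_right _ hb
  · calc b < k * 2 ^ (s + 1) := hb'
      _ ≤ k * 2 ^ (t + (D + 1)) := Nat.mul_le_mul_left k (Nat.pow_le_pow_right two_pos (by omega))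
      _ = k * 2 ^ t * 2 ^ (D + 1) := by rw [pow_add, mul_assoc]

theorem approxSubset_of_add_mul_mem_thicken {A : Set ℕ} {k J D x ρ l : ℕ} (hk : 1 ≤ k)
    (h : ∀ i < l, x + i * ρ ∈ thicken D (occupiedBlocks A k J)) :
    ApproxSubset (2 ^ (D + 1)) {y | ∃ i < l, y = k * 2 ^ x * (2 ^ ρ) ^ i} A := by
  rintro _ ⟨i, hi, rfl⟩
  obtain ⟨s, hs, hst, hts⟩ := mem_thicken.1 (h i hi)
  obtain ⟨b, hbA, hb, hb'⟩ := (mem_occupiedBlocks.1 hs).2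
  rw [mul_assoc, ← pow_mul, ← pow_add, mul_comm ρ]
  exact ⟨b, hbA, lt_mul_two_pow_of_mem_block hk hst hts hb hb'⟩

theorem approx_geometric_progression_general (A : Set ℕ) (hA : 0 < lBD A) (l : ℕ) :
    ∃ n : ℕ, 0 < n ∧ ∀ m : ℕ, ∃ a r : ℕ, m < a ∧ m < r ∧
      ApproxSubset n {x : ℕ | ∃ i < l, x = a * r ^ i} A := by
  obtain ⟨δ, hδ, hdense⟩ := exists_dense_occupiedBlocks hA
  let ι := {p : ℕ × ℕ // 1 ≤ p.1 ∧ δ * p.2 ≤ #(occupiedBlocks A p.1 p.2)}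
  obtain ⟨D, hD⟩ := exists_forall_add_mul_mem_thicken (fun i : ι => i.1.2)
    (fun i => occupiedBlocks A i.1.1 i.1.2) hδ
    (fun T => let ⟨k, J, hk, hT, hkJ⟩ := hdense T; ⟨⟨(k, J), hk, hkJ⟩, hT⟩)
    (fun _ _ hj => mem_range.2 (mem_occupiedBlocks.1 hj).1) (fun i => i.2.2) l
  refine ⟨2 ^ (D + 1), by positivity, fun m => ?_⟩
  obtain ⟨⟨⟨k, J⟩, hk, _⟩, x, hx, hmem⟩ := hD (m + 1) (m + 1)
  refine ⟨k * 2 ^ x, 2 ^ (m + 1), ?_, Nat.lt_two_pow_self.trans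
    (Nat.pow_lt_pow_right one_lt_two m.lt_succ_self), approxSubset_of_add_mul_mem_thicken hk hmem⟩
  calc m < 2 ^ x := Nat.lt_two_pow_self.trans_le' (by omega)
    _ ≤ k * 2 ^ x := Nat.le_mul_of_pos_left _ hk

theorem approx_geometric_progression (A : Set ℕ) (hA' : ∀ a ∈ A, 0 < a)
    (hA : 0 < lBD A) (l : ℕ) (hl : 1 ≤ l) :
    ∃ n : ℕ, 0 < n ∧ ∀ m : ℕ, ∃ a r : ℕ, m < a ∧ m < r ∧
      ApproxSubset n {x : ℕ | ∃ i < l, x = a * r ^ i} A :=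
  approx_geometric_progression_general A hA l
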